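/- Let H = {w ∈ ℂ : Re w < 0} and let g : H → ℂ be holomorphic with |g(w)| < 1 for all w ∈ H. Suppose g(w+2πi) = T⋆g(w) for all w ∈ H, where T ∈ SU(1,1) is elliptic, i.e. there exist P ∈ SU(1,1) and t ∈ ℝ with P⁻¹TP = Λ_e(t) (the denominator T₂₁g(w)+T₂₂ is automatically nonzero since |g|<1). Then there exist μ ∈ ℝ, A ∈ SU(1,1), and a function h holomorphic on the punctured unit disk Δ* = {0<|z|<1} which extends meromorphically to 0 (i.e. h has at most a pole at z = 0), such that (A⋆g)(w) = e^{μw}·h(e^w) for all w ∈ H. (This is the normal form of a lift of a PSU(1,1)-projective connection with elliptic monodromy, combined with the meromorphicity of h at the puncture.) -/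

import Mathlib

/-!
Conjugating by `P⁻¹ ∈ SU(1,1)` turns the monodromy into the rotation `z ↦ e^{2it} z`, so
`G = P⁻¹ ⋆ g` still maps into the unit disk and satisfies `G (w + 2πi) = e^{2πiμ} G w` with
`μ = t / π`. Then `e^{-μw} G w` is `2πi`-periodic, hence descends through `exp` to a holomorphic
`h` on the punctured disk (the `q`-expansion of `Function.Periodic.cuspFunction`). From `|G| < 1`
we get `|h z| ≤ |z|^{-μ}`, so `z^n h z` is bounded for `n ≥ μ` and Riemann's removable
singularity theorem extends it holomorphically to `0`.
-/

open Complex Matrix Metric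

noncomputable section

/-- The matrix `e₃ = diag(1,-1)`. -/
def e3 : Matrix (Fin 2) (Fin 2) ℂ := !![1, 0; 0, -1]

/-- `SU(1,1)`: matrices of determinant 1 with `S e₃ S* = e₃`. -/
def SU11 (S : Matrix (Fin 2) (Fin 2) ℂ) : Prop :=
  S.det = 1 ∧ S * e3 * Sᴴ = e3

/-- `Λ_e(t) = [[e^{it},0],[0,e^{-it}]]`. -/
def Λe (t : ℝ) : Matrix (Fin 2) (Fin 2) ℂ :=
  !![Complex.exp (Complex.I * t), 0; 0, Complex.exp (-(Complex.I * t))]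

/-- The Möbius transformation `A ⋆ z = (A₁₁ z + A₁₂)/(A₂₁ z + A₂₂)`. -/
def mobius (A : Matrix (Fin 2) (Fin 2) ℂ) (z : ℂ) : ℂ :=
  (A 0 0 * z + A 0 1) / (A 1 0 * z + A 1 1)

namespace SU11

variable {S : Matrix (Fin 2) (Fin 2) ℂ}

theorem mul_e3_mul_conjTranspose_apply (i j : Fin 2) :
    (S * e3 * Sᴴ) i j = S i 0 * starRingEnd ℂ (S j 0) - S i 1 * starRingEnd ℂ (S j 1) := by
  simp [mul_apply, Fin.sum_univ_two, e3, sub_eq_add_neg]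

theorem conj_entries (hS : SU11 S) :
    S 1 0 = starRingEnd ℂ (S 0 1) ∧ S 1 1 = starRingEnd ℂ (S 0 0) := by
  obtain ⟨hdet, hrel⟩ := hS
  rw [det_fin_two] at hdet
  have h01 : (0 : ℂ) = S 0 0 * starRingEnd ℂ (S 1 0) - S 0 1 * starRingEnd ℂ (S 1 1) := by
    rw [← mul_e3_mul_conjTranspose_apply, hrel]; rfl
  have h11 : (-1 : ℂ) = S 1 0 * starRingEnd ℂ (S 1 0) - S 1 1 * starRingEnd ℂ (S 1 1) := by
    rw [← mul_e3_mul_conjTranspose_apply, hrel]; rfl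
  constructor
  · have hb : S 0 1 = starRingEnd ℂ (S 1 0) := by
      linear_combination (starRingEnd ℂ) (S 1 0) * hdet + S 1 1 * h01 - S 0 1 * h11
    rw [hb, conj_conj]
  · have ha : S 0 0 = starRingEnd ℂ (S 1 1) := by
      linear_combination (starRingEnd ℂ) (S 1 1) * hdet + S 1 0 * h01 - S 0 0 * h11
    rw [ha, conj_conj]

theorem norm_den_sq (hS : SU11 S) (z : ℂ) :
    ‖S 1 0 * z + S 1 1‖ ^ 2 = ‖S 0 0 * z + S 0 1‖ ^ 2 + (1 - ‖z‖ ^ 2) := by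
  obtain ⟨hc, hd⟩ := hS.conj_entries
  have h00 : (1 : ℂ) = S 0 0 * starRingEnd ℂ (S 0 0) - S 0 1 * starRingEnd ℂ (S 0 1) := by
    rw [← mul_e3_mul_conjTranspose_apply, hS.2]; rfl
  have key : (S 1 0 * z + S 1 1) * starRingEnd ℂ (S 1 0 * z + S 1 1)
      = (S 0 0 * z + S 0 1) * starRingEnd ℂ (S 0 0 * z + S 0 1)
        + (1 - z * starRingEnd ℂ z) := by
    rw [hc, hd]
    simp only [map_add, map_mul, conj_conj]
    linear_combination -(1 - z * starRingEnd ℂ z) * h00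
  simp only [mul_conj, ← normSq_eq_norm_sq] at key ⊢
  exact_mod_cast key

theorem den_ne_zero (hS : SU11 S) {z : ℂ} (hz : ‖z‖ < 1) : S 1 0 * z + S 1 1 ≠ 0 := by
  intro h
  have := hS.norm_den_sq z
  rw [h, norm_zero] at this
  nlinarith [norm_nonneg (S 0 0 * z + S 0 1), norm_nonneg z]

theorem norm_mobius_lt_one (hS : SU11 S) {z : ℂ} (hz : ‖z‖ < 1) : ‖mobius S z‖ < 1 := by
  have hden := norm_pos_iff.2 (hS.den_ne_zero hz)
  have := hS.norm_den_sq z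
  rw [mobius, norm_div, div_lt_one hden]
  nlinarith [norm_nonneg (S 0 0 * z + S 0 1), norm_nonneg z]

theorem inv (hS : SU11 S) : SU11 S⁻¹ := by
  obtain ⟨hdet, hrel⟩ := hS
  have hu : IsUnit S.det := hdet ▸ isUnit_one
  have huH : IsUnit Sᴴ.det := by rw [det_conjTranspose, hdet, star_one]; exact isUnit_one
  refine ⟨by rw [det_nonsing_inv, hdet, Ring.inverse_one], ?_⟩
  calc S⁻¹ * e3 * S⁻¹ᴴ = S⁻¹ * (S * e3 * Sᴴ) * Sᴴ⁻¹ := by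
        rw [hrel, conjTranspose_nonsing_inv]
    _ = (S⁻¹ * S) * e3 * (Sᴴ * Sᴴ⁻¹) := by noncomm_ring
    _ = e3 := by
      rw [nonsing_inv_mul S hu, mul_nonsing_inv Sᴴ huH, Matrix.one_mul, Matrix.mul_one]

end SU11

theorem mobius_mul (A B : Matrix (Fin 2) (Fin 2) ℂ) {z : ℂ} (hB : B 1 0 * z + B 1 1 ≠ 0) :
    mobius (A * B) z = mobius A (mobius B z) := by
  simp only [mobius, mul_apply, Fin.sum_univ_two]
  rw [mul_div_assoc', mul_div_assoc', div_add' _ _ _ hB, div_add' _ _ _ hB,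
    div_div_div_cancel_right₀ hB]
  congr 1 <;> ring

theorem differentiableAt_mobius {A : Matrix (Fin 2) (Fin 2) ℂ} {z : ℂ}
    (hA : A 1 0 * z + A 1 1 ≠ 0) : DifferentiableAt ℂ (mobius A) z :=
  DifferentiableAt.div (by fun_prop) (by fun_prop) hA

theorem mobius_Λe (t : ℝ) (z : ℂ) : mobius (Λe t) z = exp (2 * t * I) * z := by
  rw [mobius, div_eq_iff (by simp [Λe, exp_ne_zero])]
  simp only [Λe, of_apply, cons_val', cons_val_zero, cons_val_one, empty_val', cons_val_fin_one,
    zero_mul, add_zero, zero_add]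
  rw [mul_right_comm, ← exp_add]
  congr 2
  ring

theorem mobius_inv_mobius_of_conj_eq_Λe {P T : Matrix (Fin 2) (Fin 2) ℂ} {t : ℝ}
    (hP : SU11 P) (hT : SU11 T) (hPT : P⁻¹ * T * P = Λe t) {z : ℂ} (hz : ‖z‖ < 1) :
    mobius P⁻¹ (mobius T z) = exp (2 * t * I) * mobius P⁻¹ z := by
  have hPT' : P⁻¹ * T = Λe t * P⁻¹ := by
    rw [← hPT, Matrix.mul_assoc _ P, mul_nonsing_inv P (hP.1 ▸ isUnit_one), Matrix.mul_one]
  rw [← mobius_mul _ _ (hT.den_ne_zero hz), hPT', mobius_mul _ _ (hP.inv.den_ne_zero hz),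
    mobius_Λe]

theorem re_log_neg_of_norm_lt_one {z : ℂ} (hz0 : z ≠ 0) (hz1 : ‖z‖ < 1) :
    (log z).re < 0 := by
  rw [log_re]
  exact Real.log_neg (norm_pos_iff.2 hz0) hz1

open Function Periodic in
theorem exists_comp_exp_eq_of_periodic {F : ℂ → ℂ} (hF : Periodic F (2 * Real.pi * I)) :
    ∃ h : ℂ → ℂ, (∀ w, h (exp w) = F w) ∧
      ∀ w, DifferentiableAt ℂ F w → DifferentiableAt ℂ h (exp w) := by
  have h2πI : (2 * Real.pi * I : ℂ) ≠ 0 := two_pi_I_ne_zero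
  have hf : Periodic (fun τ => F (2 * Real.pi * I * τ)) 1 := fun τ => by
    simpa [mul_add] using hF (2 * Real.pi * I * τ)
  have hq : ∀ w, qParam 1 (w / (2 * Real.pi * I)) = exp w := fun w => by
    rw [qParam, ofReal_one, div_one, mul_div_cancel₀ _ h2πI]
  refine ⟨cuspFunction 1 fun τ => F (2 * Real.pi * I * τ), fun w => ?_, fun w hw => ?_⟩
  · rw [← hq, eq_cuspFunction one_ne_zero hf, mul_div_cancel₀ _ h2πI]
  · rw [← hq]
    refine differentiableAt_cuspFunction one_ne_zero hf ?_
    rw [← mul_div_cancel₀ w h2πI] at hw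
    exact hw.comp _ (differentiableAt_id.const_mul _)

theorem exists_comp_exp_eq_of_periodicOn {F : ℂ → ℂ}
    (hF : ∀ w : ℂ, w.re < 0 → F (w + 2 * Real.pi * I) = F w)
    (hd : ∀ w : ℂ, w.re < 0 → DifferentiableAt ℂ F w) :
    ∃ h : ℂ → ℂ, DifferentiableOn ℂ h {z : ℂ | z ≠ 0 ∧ ‖z‖ < 1} ∧
      ∀ w : ℂ, w.re < 0 → h (exp w) = F w := by
  set U : Set ℂ := {w | w.re < 0}
  have hU : IsOpen U := isOpen_lt continuous_re continuous_const
  have hper : Function.Periodic (U.indicator F) (2 * Real.pi * I) := fun w => by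
    by_cases hw : w.re < 0
    · simp [U, Set.indicator_of_mem, hw, hF w hw]
    · simp [U, Set.indicator_of_notMem, hw]
  obtain ⟨h, hexp, hdiff⟩ := exists_comp_exp_eq_of_periodic hper
  refine ⟨h, fun z ⟨hz0, hz1⟩ => ?_,
    fun w hw => (hexp w).trans (Set.indicator_of_mem (s := U) hw F)⟩
  have hlog := re_log_neg_of_norm_lt_one hz0 hz1
  rw [← exp_log hz0]
  refine (hdiff _ ?_).differentiableWithinAt
  exact (hd _ hlog).congr_of_eventuallyEq
    (by filter_upwards [hU.mem_nhds hlog] with x hx using Set.indicator_of_mem hx F)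

theorem exists_pow_mul_eq_differentiableOn_ball {h : ℂ → ℂ} {C μ : ℝ}
    (hd : DifferentiableOn ℂ h {z : ℂ | z ≠ 0 ∧ ‖z‖ < 1})
    (hb : ∀ z : ℂ, z ≠ 0 → ‖z‖ < 1 → ‖h z‖ ≤ C * ‖z‖ ^ (-μ)) :
    ∃ (n : ℕ) (h₀ : ℂ → ℂ), DifferentiableOn ℂ h₀ (ball 0 1) ∧
      ∀ z : ℂ, z ≠ 0 → ‖z‖ < 1 → z ^ n * h z = h₀ z := by
  set n := ⌈μ⌉₊
  have hpunct : ball (0 : ℂ) 1 \ {0} = {z : ℂ | z ≠ 0 ∧ ‖z‖ < 1} := by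
    ext z; simp [and_comm]
  have hbdd : BddAbove (norm ∘ (fun z => z ^ n * h z) '' (ball (0 : ℂ) 1 \ {0})) := by
    refine ⟨C, ?_⟩
    rintro _ ⟨z, hz, rfl⟩
    rw [hpunct] at hz
    obtain ⟨hz0, hz1⟩ := hz
    have hzpos : 0 < ‖z‖ := norm_pos_iff.2 hz0
    have hC : 0 ≤ C :=
      nonneg_of_mul_nonneg_left ((norm_nonneg _).trans (hb z hz0 hz1)) (by positivity)
    calc ‖z ^ n * h z‖ ≤ ‖z‖ ^ n * (C * ‖z‖ ^ (-μ)) := by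
          rw [norm_mul, norm_pow]; gcongr; exact hb z hz0 hz1
      _ = C * ‖z‖ ^ ((n : ℝ) - μ) := by
          rw [Real.rpow_sub hzpos, Real.rpow_neg hzpos.le, Real.rpow_natCast]; ring
      _ ≤ C * 1 := by
          gcongr
          exact Real.rpow_le_one (norm_nonneg z) hz1.le (sub_nonneg.2 (Nat.le_ceil μ))
      _ = C := mul_one C
  have hd' : DifferentiableOn ℂ (fun z => z ^ n * h z) (ball (0 : ℂ) 1 \ {0}) :=
    hpunct ▸ (differentiable_pow n).differentiableOn.mul hd
  exact ⟨n, _, differentiableOn_update_limUnder_of_bddAbove (ball_mem_nhds 0 one_pos) hd' hbdd,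
    fun z hz0 _ => (Function.update_of_ne hz0 _ (fun z => z ^ n * h z)).symm⟩

theorem exists_eq_exp_mul_comp_exp_of_twisted_periodicOn {G : ℂ → ℂ} {C μ : ℝ}
    (hper : ∀ w : ℂ, w.re < 0 → G (w + 2 * Real.pi * I) = exp (μ * (2 * Real.pi * I)) * G w)
    (hd : ∀ w : ℂ, w.re < 0 → DifferentiableAt ℂ G w)
    (hb : ∀ w : ℂ, w.re < 0 → ‖G w‖ ≤ C) :
    ∃ h : ℂ → ℂ, DifferentiableOn ℂ h {z : ℂ | z ≠ 0 ∧ ‖z‖ < 1} ∧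
      (∃ (n : ℕ) (h₀ : ℂ → ℂ), DifferentiableOn ℂ h₀ (ball 0 1) ∧
        ∀ z : ℂ, z ≠ 0 → ‖z‖ < 1 → z ^ n * h z = h₀ z) ∧
      ∀ w : ℂ, w.re < 0 → G w = exp (μ * w) * h (exp w) := by
  obtain ⟨h, hhd, hh⟩ := exists_comp_exp_eq_of_periodicOn (F := fun w => exp (-μ * w) * G w)
    (fun w hw => by
      rw [hper w hw, ← mul_assoc, ← exp_add]
      congr 2
      ring)
    (fun w hw => (differentiable_exp.comp (differentiable_id.const_mul _) w).mul (hd w hw))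
  have hbound : ∀ z : ℂ, z ≠ 0 → ‖z‖ < 1 → ‖h z‖ ≤ C * ‖z‖ ^ (-μ) := by
    intro z hz0 hz1
    have hlog := re_log_neg_of_norm_lt_one hz0 hz1
    rw [← exp_log hz0, hh _ hlog, norm_mul, mul_comm, norm_exp, norm_exp, ← Real.exp_mul]
    exact mul_le_mul (hb _ hlog) (Real.exp_le_exp.2 (le_of_eq (by simp [mul_comm])))
      (by positivity) ((norm_nonneg _).trans (hb _ hlog))
  refine ⟨h, hhd, exists_pow_mul_eq_differentiableOn_ball hhd hbound, fun w hw => ?_⟩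
  rw [hh w hw, ← mul_assoc, ← exp_add]
  simp

/-- Normal form of a lift with elliptic monodromy: if `g` is holomorphic on
the left half-plane with `|g| < 1` and `g(w + 2πi) = T ⋆ g(w)` with
`T ∈ SU(1,1)` elliptic, then there are `μ ∈ ℝ`, `A ∈ SU(1,1)` and a function
`h` holomorphic on the punctured unit disk with at most a pole at `0`, such
that `(A ⋆ g)(w) = e^{μw} h(e^w)`. -/
theorem elliptic_normal_form
    (g : ℂ → ℂ) (T : Matrix (Fin 2) (Fin 2) ℂ)
    (hg : ∀ w : ℂ, w.re < 0 → DifferentiableAt ℂ g w)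
    (hg1 : ∀ w : ℂ, w.re < 0 → ‖g w‖ < 1)
    (hT : SU11 T)
    (hell : ∃ (P : Matrix (Fin 2) (Fin 2) ℂ) (t : ℝ),
      SU11 P ∧ P⁻¹ * T * P = Λe t)
    (hmono : ∀ w : ℂ, w.re < 0 →
      g (w + 2 * Real.pi * Complex.I) = mobius T (g w)) :
    ∃ (μ : ℝ) (A : Matrix (Fin 2) (Fin 2) ℂ) (h : ℂ → ℂ),
      SU11 A ∧
      DifferentiableOn ℂ h {z : ℂ | z ≠ 0 ∧ ‖z‖ < 1} ∧
      (∃ (n : ℕ) (h₀ : ℂ → ℂ), DifferentiableOn ℂ h₀ (ball (0 : ℂ) 1) ∧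
        ∀ z : ℂ, z ≠ 0 → ‖z‖ < 1 → z ^ n * h z = h₀ z) ∧
      ∀ w : ℂ, w.re < 0 →
        mobius A (g w) = Complex.exp ((μ : ℂ) * w) * h (Complex.exp w) := by
  obtain ⟨P, t, hP, hPT⟩ := hell
  have hμ : exp (((t / Real.pi : ℝ) : ℂ) * (2 * Real.pi * I)) = exp (2 * t * I) := by
    congr 1
    push_cast
    field_simp
  obtain ⟨h, hhd, hmero, hh⟩ :=
    exists_eq_exp_mul_comp_exp_of_twisted_periodicOn (G := fun w => mobius P⁻¹ (g w)) (C := 1)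
      (fun w hw => by
        rw [hmono w hw, hμ, mobius_inv_mobius_of_conj_eq_Λe hP hT hPT (hg1 w hw)])
      (fun w hw => (differentiableAt_mobius (hP.inv.den_ne_zero (hg1 w hw))).comp w (hg w hw))
      (fun w hw => (hP.inv.norm_mobius_lt_one (hg1 w hw)).le)
  exact ⟨t / Real.pi, P⁻¹, h, hP.inv, hhd, hmero, hh⟩
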